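/- Up to isomorphism, the exterior algebra Λ(z) = k⟨z⟩/(z²) with z odd primitive is the unique two-dimensional Hopf superalgebra over an algebraically closed field of characteristic zero whose odd part is non-zero. -/

import Mathlib

open TensorProduct

section Base
variable (k : Type) [Field k]

/-- Koszul sign operator on a tensor product, built from parity involutions. -/
noncomputable def koszul {M N : Type} [AddCommGroup M] [Module k M] [AddCommGroup N] [Module k N]
    (J₁ : M →ₗ[k] M) (J₂ : N →ₗ[k] N) : M ⊗[k] N →ₗ[k] M ⊗[k] N :=
  (2:k)⁻¹ • (LinearMap.id + TensorProduct.map J₁ LinearMap.id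
      + TensorProduct.map LinearMap.id J₂ - TensorProduct.map J₁ J₂)

variable (A : Type) [Ring A] [Algebra k A]

/-- Signed ("super") multiplication `(A ⊗ A) ⊗ (A ⊗ A) → A ⊗ A`,
`(a ⊗ b) ⊗ (c ⊗ d) ↦ (−1)^{|b||c|} (ac) ⊗ (bd)`. -/
noncomputable def tensorSuperMul (J : A →ₗ[k] A) :
    (A ⊗[k] A) ⊗[k] (A ⊗[k] A) →ₗ[k] A ⊗[k] A :=
  TensorProduct.map (LinearMap.mul' k A) (LinearMap.mul' k A)
    ∘ₗ koszul k (TensorProduct.map LinearMap.id J) (TensorProduct.map J LinearMap.id)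
    ∘ₗ (TensorProduct.tensorTensorTensorComm k A A A A).toLinearMap

/-- A Hopf superalgebra, encoded by its parity involution `J` (the grading is by
`J`-eigenspaces: even part `{a | J a = a}`, odd part `{a | J a = -a}`). -/
structure HopfSuperData : Type where
  J : A →ₐ[k] A
  J_invol : ∀ a, J (J a) = a
  comul : A →ₗ[k] A ⊗[k] A
  counit : A →ₗ[k] k
  antipode : A →ₗ[k] A
  comul_J : ∀ a, comul (J a) = TensorProduct.map J.toLinearMap J.toLinearMap (comul a)
  counit_J : ∀ a, counit (J a) = counit a
  antipode_J : ∀ a, antipode (J a) = J (antipode a)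
  coassoc : (TensorProduct.assoc k A A A).toLinearMap ∘ₗ comul.rTensor A ∘ₗ comul
      = comul.lTensor A ∘ₗ comul
  rTensor_counit_comul : ∀ a, (TensorProduct.lid k A) (counit.rTensor A (comul a)) = a
  lTensor_counit_comul : ∀ a, (TensorProduct.rid k A) (counit.lTensor A (comul a)) = a
  comul_one : comul 1 = 1 ⊗ₜ[k] 1
  counit_one : counit 1 = 1
  counit_mul : ∀ a b, counit (a * b) = counit a * counit b
  comul_mul : ∀ a b, comul (a * b) = tensorSuperMul k A J.toLinearMap (comul a ⊗ₜ[k] comul b)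
  mul_antipode_rTensor_comul :
      ∀ a, LinearMap.mul' k A (antipode.rTensor A (comul a)) = algebraMap k A (counit a)
  mul_antipode_lTensor_comul :
      ∀ a, LinearMap.mul' k A (antipode.lTensor A (comul a)) = algebraMap k A (counit a)

variable {k A}

namespace HopfSuperData

variable {B : Type} [Ring B] [Algebra k B]

/-- The odd part of a Hopf superalgebra is nonzero. -/
def HasOddPart (H : HopfSuperData k A) : Prop := ∃ a : A, a ≠ 0 ∧ H.J a = -a

/-- Purely even Hopf superalgebras, i.e. ordinary Hopf algebras. -/
def PurelyEven (H : HopfSuperData k A) : Prop := ∀ a : A, H.J a = a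

/-- Even group-like elements. -/
def IsGroupLike (H : HopfSuperData k A) (g : A) : Prop :=
  H.J g = g ∧ H.counit g = 1 ∧ H.comul g = g ⊗ₜ[k] g

/-- An algebra isomorphism is an isomorphism of Hopf superalgebras if it preserves the
grading, the comultiplication and the counit. -/
def IsIso (H : HopfSuperData k A) (H' : HopfSuperData k B) (e : A ≃ₐ[k] B) : Prop :=
  (∀ a, e (H.J a) = H'.J (e a)) ∧
  (∀ a, H'.comul (e a) = TensorProduct.map e.toLinearMap e.toLinearMap (H.comul a)) ∧
  (∀ a, H'.counit (e a) = H.counit a)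

end HopfSuperData

end Base
section Ext
variable {k : Type} [Field k] {A A' : Type} [Ring A] [Algebra k A] [Ring A'] [Algebra k A']

namespace HopfSuperData

/-- The part of the comultiplication whose second tensor leg is even. -/
noncomputable def comulEvenPart (H : HopfSuperData k A) : A →ₗ[k] A ⊗[k] A :=
  (2:k)⁻¹ • (H.comul + H.J.toLinearMap.lTensor A ∘ₗ H.comul)

/-- The part of the comultiplication whose second tensor leg is odd. -/
noncomputable def comulOddPart (H : HopfSuperData k A) : A →ₗ[k] A ⊗[k] A :=
  (2:k)⁻¹ • (H.comul - H.J.toLinearMap.lTensor A ∘ₗ H.comul)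

/-- `J^i` for `i : ZMod 2`. -/
noncomputable def Jpow (H : HopfSuperData k A) (i : ZMod 2) : A →ₗ[k] A :=
  if i = 0 then LinearMap.id else H.J.toLinearMap

/-- `β i a` represents `a # σ^i` in the bosonization `H # k[ℤ/2]`: this predicate says that
an ordinary Hopf algebra `B`, with structural maps given by Mathlib's `HopfAlgebra` class,
is (a realization of) the Radford–Majid bosonization of the Hopf superalgebra `H`. -/
structure IsBosonization {B : Type} [Ring B] [HopfAlgebra k B]
    (H : HopfSuperData k A) (β : ZMod 2 → A →ₗ[k] B) : Prop where
  bij : Function.Bijective fun p : A × A => β 0 p.1 + β 1 p.2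
  map_one : β 0 1 = 1
  map_mul : ∀ (i j : ZMod 2) (a a' : A), β i a * β j a' = β (i + j) (a * H.Jpow i a')
  map_comul : ∀ (i : ZMod 2) (a : A), Coalgebra.comul (β i a) =
      TensorProduct.map (β i) (β i) (H.comulEvenPart a)
      + TensorProduct.map (β (i+1)) (β i) (H.comulOddPart a)
  map_counit : ∀ (i : ZMod 2) (a : A), Coalgebra.counit (β i a) = H.counit a

end HopfSuperData

/-- Evaluation of a bilinear pairing on tensor squares:
`(a ⊗ a') ⊗ (b ⊗ b') ↦ ⟨a,b⟩⟨a',b'⟩`. -/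
noncomputable def pairTensor (Bp : A →ₗ[k] A' →ₗ[k] k) :
    (A ⊗[k] A) ⊗[k] (A' ⊗[k] A') →ₗ[k] k :=
  LinearMap.mul' k k
    ∘ₗ TensorProduct.map (TensorProduct.lift Bp) (TensorProduct.lift Bp)
    ∘ₗ (TensorProduct.tensorTensorTensorComm k A A A' A').toLinearMap

/-- A Hopf (super)pairing between two Hopf superalgebras. -/
structure IsHopfPairing (H : HopfSuperData k A) (H' : HopfSuperData k A')
    (Bp : A →ₗ[k] A' →ₗ[k] k) : Prop where
  parity : ∀ a a', Bp (H.J a) (H'.J a') = Bp a a'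
  pair_mul_right : ∀ (a : A) (b b' : A'),
    Bp a (b * b') = pairTensor Bp (H.comul a ⊗ₜ[k] (b ⊗ₜ[k] b'))
  pair_mul_left : ∀ (a a' : A) (b : A'),
    Bp (a * a') b = pairTensor Bp ((a ⊗ₜ[k] a') ⊗ₜ[k] H'.comul b)
  pair_one_right : ∀ a, Bp a 1 = H.counit a
  pair_one_left : ∀ b, Bp 1 b = H'.counit b

/-- Nondegeneracy of a bilinear pairing. -/
def PairNondeg (Bp : A →ₗ[k] A' →ₗ[k] k) : Prop :=
  (∀ a, (∀ b, Bp a b = 0) → a = 0) ∧ (∀ b, (∀ a, Bp a b = 0) → b = 0)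

end Ext

section Ord
variable (k : Type) [Field k] {A : Type} [AddCommGroup A] [Module k A] [Coalgebra k A]

/-- The right hit action `α ⇀ a = a₍₁₎ α(a₍₂₎)`. -/
noncomputable def hitR (α : A →ₗ[k] k) : A →ₗ[k] A :=
  (TensorProduct.rid k A).toLinearMap ∘ₗ α.lTensor A ∘ₗ Coalgebra.comul

/-- The left hit action `a ↼ α = α(a₍₁₎) a₍₂₎`. -/
noncomputable def hitL (α : A →ₗ[k] k) : A →ₗ[k] A :=
  (TensorProduct.lid k A).toLinearMap ∘ₗ α.rTensor A ∘ₗ Coalgebra.comul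

/-- Convolution product of two functionals on a coalgebra. -/
noncomputable def conv (α β : A →ₗ[k] k) : A →ₗ[k] k :=
  LinearMap.mul' k k ∘ₗ TensorProduct.map α β ∘ₗ Coalgebra.comul

/-- Group-like element of an ordinary coalgebra. -/
def OrdGroupLike (g : A) : Prop :=
  Coalgebra.counit g = (1:k) ∧ Coalgebra.comul g = g ⊗ₜ[k] g

end Ord

section Adm
variable (k : Type) [Field k] {A : Type} [Ring A] [HopfAlgebra k A]

/-- An admissible datum `(g, α)` for a Hopf algebra `A`: `g` is a group-like of order 2,
`α` is a character of convolution-order 2, and `α g = -1`. -/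
def IsAdmissible (g : A) (α : A →ₐ[k] k) : Prop :=
  OrdGroupLike k g ∧ g * g = 1 ∧ g ≠ 1
    ∧ conv k α.toLinearMap α.toLinearMap = Coalgebra.counit
    ∧ α.toLinearMap ≠ Coalgebra.counit ∧ α g = -1

end Adm

section GA
variable (k : Type) [Field k] (M : Type) [Monoid M]

/-- Comultiplication of the group (monoid) algebra: every `of g` is group-like. -/
noncomputable def gaComul : MonoidAlgebra k M →ₗ[k] MonoidAlgebra k M ⊗[k] MonoidAlgebra k M :=
  (Finsupp.lsum k fun g =>
    LinearMap.toSpanSingleton k _ (MonoidAlgebra.of k M g ⊗ₜ[k] MonoidAlgebra.of k M g))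
    ∘ₗ (MonoidAlgebra.coeffLinearEquiv k).toLinearMap

/-- Counit of the group (monoid) algebra. -/
noncomputable def gaCounit : MonoidAlgebra k M →ₗ[k] k :=
  Finsupp.lsum k (fun _ => LinearMap.id) ∘ₗ (MonoidAlgebra.coeffLinearEquiv k).toLinearMap

end GA
section Lam
variable {k : Type} [Field k] {E : Type} [Ring E] [Algebra k E]

/-- `L` is (a realization of) the exterior Hopf superalgebra `Λ(z)` on one odd primitive
generator `z`: it is `2`-dimensional with `z ≠ 0` odd, `z² = 0` and `z` primitive. -/
def IsExteriorOne (L : HopfSuperData k E) (z : E) : Prop :=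
  z ≠ 0 ∧ L.J z = -z ∧ z * z = 0
    ∧ L.comul z = 1 ⊗ₜ[k] z + z ⊗ₜ[k] 1
    ∧ Module.finrank k E = 2

end Lam
section Proof10
variable {k : Type} [Field k] [CharZero k] {A : Type} [Ring A] [Algebra k A]

lemma aux_neg_self_zero {M : Type} [AddCommGroup M] [Module k M] {x : M} (h : -x = x) : x = 0 := by
  have h2 : (2:k) • x = 0 := by
    rw [two_smul]
    nth_rewrite 1 [← h]
    exact neg_add_cancel x
  rcases smul_eq_zero.mp h2 with h' | h'
  · exact absurd h' two_ne_zero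
  · exact h'

lemma aux_tensorSuperMul_tmul (J : A →ₗ[k] A) (a b c d : A) :
    tensorSuperMul k A J ((a ⊗ₜ[k] b) ⊗ₜ[k] (c ⊗ₜ[k] d)) =
      (2:k)⁻¹ • ((a*c) ⊗ₜ[k] (b*d) + (a*(J c)) ⊗ₜ[k] (b*d)
        + (a*c) ⊗ₜ[k] ((J b)*d) - (a*(J c)) ⊗ₜ[k] ((J b)*d)) := by
  simp [tensorSuperMul, koszul, LinearMap.mul'_apply, TensorProduct.tensorTensorTensorComm_tmul,
    smul_add, smul_sub]

lemma aux_pair_indep [Nontrivial A] (H : HopfSuperData k A) {w : A} (hw0 : w ≠ 0)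
    (hJw : H.J w = -w) : LinearIndependent k ![(1:A), w] := by
  rw [LinearIndependent.pair_iff]
  intro s t hst
  have hJ : s • (1:A) - t • w = 0 := by
    have h := congrArg H.J hst
    rw [map_add, map_smul, map_smul, map_one, map_zero, hJw, smul_neg, ← sub_eq_add_neg] at h
    exact h
  have hs : s • (1:A) = 0 := by
    have h2 : (2:k) • (s • (1:A)) = 0 := by
      rw [two_smul]
      calc s • (1:A) + s • (1:A) = (s • (1:A) + t • w) + (s • (1:A) - t • w) := by abel
      _ = 0 := by rw [hst, hJ, add_zero]
    rcases smul_eq_zero.mp h2 with h' | h'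
    · exact absurd h' two_ne_zero
    · exact h'
  have hs0 : s = 0 := by
    rcases smul_eq_zero.mp hs with h | h
    · exact h
    · exact absurd h one_ne_zero
  refine ⟨hs0, ?_⟩
  rw [hs0, zero_smul, zero_add] at hst
  rcases smul_eq_zero.mp hst with h | h
  · exact h
  · exact absurd h hw0

end Proof10

/-- Over an algebraically closed field of characteristic zero, the exterior
algebra `Λ(z)` with `z` odd primitive is, up to isomorphism, the unique two-dimensional Hopf
superalgebra whose odd part is non-zero. -/
theorem stmt10 (k : Type) [Field k] [IsAlgClosed k] [CharZero k]
    (A : Type) [Ring A] [Algebra k A] (H : HopfSuperData k A)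
    (hdim : Module.finrank k A = 2) (hodd : H.HasOddPart)
    (E : Type) [Ring E] [Algebra k E] (L : HopfSuperData k E) (z : E)
    (hL : IsExteriorOne L z) :
    ∃ e : A ≃ₐ[k] E, H.IsIso L e := by
  obtain ⟨w, hw0, hJw⟩ := hodd
  obtain ⟨hz0, hJz, hzz, hdz, hdimE⟩ := hL
  have hA : Nontrivial A := Module.nontrivial_of_finrank_pos (R := k) (by rw [hdim]; norm_num)
  have hE : Nontrivial E := Module.nontrivial_of_finrank_pos (R := k) (by rw [hdimE]; norm_num)
  -- counits of odd elements vanish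
  have hcw : H.counit w = 0 := by
    have h := H.counit_J w
    rw [hJw, map_neg] at h
    exact aux_neg_self_zero (k := k) h
  have hcz : L.counit z = 0 := by
    have h := L.counit_J z
    rw [hJz, map_neg] at h
    exact aux_neg_self_zero (k := k) h
  -- bases
  have liA := aux_pair_indep H hw0 hJw
  have liE := aux_pair_indep L hz0 hJz
  let bA : Module.Basis (Fin 2) k A :=
    basisOfLinearIndependentOfCardEqFinrank liA (by rw [hdim]; simp)
  let bE : Module.Basis (Fin 2) k E :=
    basisOfLinearIndependentOfCardEqFinrank liE (by rw [hdimE]; simp)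
  have hcoeA : ⇑bA = ![(1:A), w] := coe_basisOfLinearIndependentOfCardEqFinrank _ _
  have hcoeE : ⇑bE = ![(1:E), z] := coe_basisOfLinearIndependentOfCardEqFinrank _ _
  have hbA0 : bA 0 = 1 := by rw [hcoeA]; rfl
  have hbA1 : bA 1 = w := by rw [hcoeA]; rfl
  have hbE0 : bE 0 = 1 := by rw [hcoeE]; rfl
  have hbE1 : bE 1 = z := by rw [hcoeE]; rfl
  -- coordinates
  have coordA : ∀ x : A, x = bA.repr x 0 • (1:A) + bA.repr x 1 • w := by
    intro x
    have h := bA.sum_repr x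
    rw [Fin.sum_univ_two, hbA0, hbA1] at h
    exact h.symm
  have coordE : ∀ x : E, x = bE.repr x 0 • (1:E) + bE.repr x 1 • z := by
    intro x
    have h := bE.sum_repr x
    rw [Fin.sum_univ_two, hbE0, hbE1] at h
    exact h.symm
  -- linear independence of the four basic tensors
  have tLI : ∀ a b c d : k,
      a • ((1:A) ⊗ₜ[k] (1:A)) + b • ((1:A) ⊗ₜ[k] w) + c • (w ⊗ₜ[k] (1:A)) + d • (w ⊗ₜ[k] w) = 0
      → a = 0 ∧ b = 0 ∧ c = 0 ∧ d = 0 := by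
    intro a b c d h
    have li := (Module.Basis.tensorProduct bA bA).linearIndependent
    rw [Fintype.linearIndependent_iff] at li
    have key := li (fun p => ![![a,b],![c,d]] p.1 p.2) ?_
    · exact ⟨by simpa using key (0,0), by simpa using key (0,1),
        by simpa using key (1,0), by simpa using key (1,1)⟩
    · rw [Fintype.sum_prod_type]
      simp only [Fin.sum_univ_two, Module.Basis.tensorProduct_apply, hbA0, hbA1,
        Matrix.cons_val_zero, Matrix.cons_val_one, Matrix.head_cons]
      linear_combination (norm := module) h
  -- the comultiplication of w
  set c00 := (Module.Basis.tensorProduct bA bA).repr (H.comul w) (0,0) with hc00def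
  set c01 := (Module.Basis.tensorProduct bA bA).repr (H.comul w) (0,1) with hc01def
  set c10 := (Module.Basis.tensorProduct bA bA).repr (H.comul w) (1,0) with hc10def
  set c11 := (Module.Basis.tensorProduct bA bA).repr (H.comul w) (1,1) with hc11def
  have hs : c00 • ((1:A) ⊗ₜ[k] (1:A)) + c01 • ((1:A) ⊗ₜ[k] w)
      + c10 • (w ⊗ₜ[k] (1:A)) + c11 • (w ⊗ₜ[k] w) = H.comul w := by
    have h := (Module.Basis.tensorProduct bA bA).sum_repr (H.comul w)
    rw [Fintype.sum_prod_type] at h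
    simp only [Fin.sum_univ_two, Module.Basis.tensorProduct_apply, hbA0, hbA1] at h
    rw [← hc00def, ← hc01def, ← hc10def, ← hc11def] at h
    linear_combination (norm := module) h
  have hpar : TensorProduct.map H.J.toLinearMap H.J.toLinearMap (H.comul w) = -(H.comul w) := by
    have h := H.comul_J w
    rw [hJw, map_neg] at h
    exact h.symm
  have hmapJJ : TensorProduct.map H.J.toLinearMap H.J.toLinearMap (H.comul w)
      = c00 • ((1:A) ⊗ₜ[k] (1:A)) - c01 • ((1:A) ⊗ₜ[k] w)
        - c10 • (w ⊗ₜ[k] (1:A)) + c11 • (w ⊗ₜ[k] w) := by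
    rw [← hs]
    simp only [map_add, map_smul, TensorProduct.map_tmul, AlgHom.toLinearMap_apply, map_one, hJw]
    simp only [tmul_neg, neg_tmul, neg_neg, smul_neg]
    module
  have h0011 : (c00 + c00) • ((1:A) ⊗ₜ[k] (1:A)) + (0:k) • ((1:A) ⊗ₜ[k] w)
      + (0:k) • (w ⊗ₜ[k] (1:A)) + (c11 + c11) • (w ⊗ₜ[k] w) = 0 := by
    have h := hpar
    rw [hmapJJ, ← hs] at h
    linear_combination (norm := module) h
  obtain ⟨e00, -, -, e11⟩ := tLI _ _ _ _ h0011
  have hc00 : c00 = 0 := add_self_eq_zero.mp e00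
  have hc11 : c11 = 0 := add_self_eq_zero.mp e11
  -- counit legs
  have hleg1 : c00 • (1:A) + c01 • w = w := by
    have h := H.rTensor_counit_comul w
    rw [← hs] at h
    simp only [map_add, map_smul, LinearMap.rTensor_tmul, TensorProduct.lid_tmul,
      H.counit_one, hcw, one_smul, zero_smul, smul_zero, add_zero] at h
    exact h
  have hleg2 : c00 • (1:A) + c10 • w = w := by
    have h := H.lTensor_counit_comul w
    rw [← hs] at h
    simp only [map_add, map_smul, LinearMap.lTensor_tmul, TensorProduct.rid_tmul,
      H.counit_one, hcw, one_smul, zero_smul, smul_zero, add_zero] at h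
    exact h
  have hc01 : c01 = 1 := by
    have h : (c00) • (1:A) + (c01 - 1) • w = 0 := by
      linear_combination (norm := module) hleg1
    exact sub_eq_zero.mp (LinearIndependent.pair_iff.mp liA _ _ h).2
  have hc10 : c10 = 1 := by
    have h : (c00) • (1:A) + (c10 - 1) • w = 0 := by
      linear_combination (norm := module) hleg2
    exact sub_eq_zero.mp (LinearIndependent.pair_iff.mp liA _ _ h).2
  have hdw : H.comul w = (1:A) ⊗ₜ[k] w + w ⊗ₜ[k] 1 := by
    rw [← hs, hc00, hc01, hc10, hc11]
    simp
  -- the square of w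
  have hww : w * w = bA.repr (w*w) 0 • (1:A) + bA.repr (w*w) 1 • w := coordA (w*w)
  set p := bA.repr (w*w) 0 with hpdef
  set q := bA.repr (w*w) 1 with hqdef
  have hq : q = 0 := by
    have h : H.J (w*w) = w*w := by rw [map_mul, hJw, neg_mul_neg]
    rw [hww] at h
    rw [map_add, map_smul, map_smul, map_one, hJw, smul_neg] at h
    have h2 : (0:k) • (1:A) + (q + q) • w = 0 := by
      linear_combination (norm := module) - h
    exact add_self_eq_zero.mp (LinearIndependent.pair_iff.mp liA _ _ h2).2
  have hww1 : w * w = p • (1:A) := by rw [hww, hq, zero_smul, add_zero]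
  have hsup : H.comul (w*w) = (1:A) ⊗ₜ[k] (w*w) + (w*w) ⊗ₜ[k] (1:A) := by
    rw [H.comul_mul, hdw]
    rw [tmul_add, add_tmul, add_tmul]
    simp only [map_add, aux_tensorSuperMul_tmul, AlgHom.toLinearMap_apply, map_one, hJw,
      one_mul, mul_one, neg_mul, mul_neg, tmul_neg, neg_tmul, neg_neg]
    module
  have hp : p = 0 := by
    have h2 := hsup
    rw [hww1, map_smul, H.comul_one] at h2
    simp only [tmul_smul, ← smul_tmul'] at h2
    have h4 : p • ((1:A) ⊗ₜ[k] (1:A)) + (0:k) • ((1:A) ⊗ₜ[k] w)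
        + (0:k) • (w ⊗ₜ[k] (1:A)) + (0:k) • (w ⊗ₜ[k] w) = 0 := by
      linear_combination (norm := module) - h2
    exact (tLI _ _ _ _ h4).1
  have hww0 : w * w = 0 := by rw [hww1, hp, zero_smul]
  -- the algebra isomorphism
  let f : A ≃ₗ[k] E := bA.equiv bE (Equiv.refl _)
  have hf0 : f 1 = 1 := by
    have h := bA.equiv_apply (i := 0) bE (Equiv.refl _)
    simp only [Equiv.refl_apply, hbA0, hbE0] at h
    exact h
  have hfw : f w = z := by
    have h := bA.equiv_apply (i := 1) bE (Equiv.refl _)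
    simp only [Equiv.refl_apply, hbA1, hbE1] at h
    exact h
  have hmul : ∀ x y : A, f (x*y) = f x * f y := by
    intro x y
    rw [coordA x, coordA y]
    simp only [mul_add, add_mul, smul_mul_smul_comm, one_mul, mul_one, hww0, hzz,
      smul_zero, add_zero, map_add, map_smul, hf0, hfw]
  refine ⟨AlgEquiv.ofLinearEquiv f hf0 hmul, ?_, ?_, ?_⟩
  · intro a
    rw [coordA a]
    simp only [map_add, map_smul, map_one, hJw, hJz, AlgEquiv.ofLinearEquiv_apply,
      hf0, hfw, map_neg]
  · intro a
    rw [coordA a]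
    simp only [map_add, map_smul, AlgEquiv.ofLinearEquiv_apply, hf0, hfw,
      L.comul_one, H.comul_one, hdz, hdw, TensorProduct.map_tmul,
      AlgEquiv.toLinearMap_apply]
  · intro a
    rw [coordA a]
    simp only [map_add, map_smul, AlgEquiv.ofLinearEquiv_apply, hf0, hfw,
      L.counit_one, H.counit_one, hcw, hcz]
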